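/- arXiv:2511.07900 — 4 statements merged into one kernel-verified Lean document; each statement's English description precedes it below -/
import Mathlib

section
/- Let A be a commutative ring and p ⊂ A a prime ideal. Let κ : A → \hat A_p be the composite of algebraMap A A_p with the canonical map from A_p to its (p·A_p)-adic completion, and let H^A_p = (A/ker κ)_{\bar p} be the localization of A/ker κ at the prime ideal \bar p = p/ker κ (note ker κ ⊆ p), with canonical homomorphism η : A → H^A_p. Let B be a Noetherian commutative local ring with maximal ideal m_B, let \hat B be the m_B-adic completion of B, and let \hat m_B be the kernel of the canonical projection \hat B → B/m_B. Then for every ring homomorphism f : A → \hat B with f⁻¹(\hat m_B) = p there exists a unique ring homomorphism ξ : H^A_p → \hat B with ξ ∘ η = f. (The functor \hat L_{p⊂A}(B) = {f : A → \hat B | f⁻¹(\hat m_B) = p} on local rings is represented by H^A_p.) -/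
namespace AdicAux

open AdicCompletion

variable {R : Type*} [CommRing R] (I : Ideal R)

lemma smul_top_eq (n : ℕ) : (I ^ n • ⊤ : Ideal R) = I ^ n := by ext x; simp

lemma val_algebraMap (r : R) (n : ℕ) :
    ((algebraMap R (AdicCompletion I R)) r).val n
      = Ideal.Quotient.mk (I ^ n • ⊤ : Ideal R) r := rfl

lemma evalₐ_eq_zero_iff (n : ℕ) (x : AdicCompletion I R) :
    evalₐ I n x = 0 ↔ x.val n = 0 := by
  have h : (I ^ n • ⊤ : Ideal R) = I ^ n := smul_top_eq I n
  rw [show evalₐ I n x = Ideal.quotientEquivAlgOfEq R h (eval I R n x) from rfl,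
    EmbeddingLike.map_eq_zero_iff]
  rfl

lemma eq_zero_of_forall_evalₐ (x : AdicCompletion I R)
    (h : ∀ n, evalₐ I n x = 0) : x = 0 :=
  AdicCompletion.ext fun n => ((evalₐ_eq_zero_iff I n x).mp (h n)).trans
    (AdicCompletion.val_zero_apply I R n).symm

lemma mem_pow_of_algebraMap_eq_zero (r : R)
    (h : algebraMap R (AdicCompletion I R) r = 0) (n : ℕ) : r ∈ I ^ n := by
  have hv : ((algebraMap R (AdicCompletion I R)) r).val n = 0 := by rw [h]; rfl
  rw [val_algebraMap] at hv
  have := Ideal.Quotient.eq_zero_iff_mem.mp hv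
  rwa [smul_top_eq] at this

lemma transitionMap_mk (M : Type*) [AddCommGroup M] [Module R M] {m n : ℕ} (hmn : m ≤ n)
    (x : M) : transitionMap I M hmn (Submodule.Quotient.mk (p := (I ^ n • ⊤ : Submodule R M)) x)
      = Submodule.Quotient.mk (p := (I ^ m • ⊤ : Submodule R M)) x := rfl

lemma transitionMap_mul {m n : ℕ} (hmn : m ≤ n) (a b : R ⧸ (I ^ n • ⊤ : Ideal R)) :
    transitionMap I R hmn (a * b) = transitionMap I R hmn a * transitionMap I R hmn b := by
  obtain ⟨a, rfl⟩ := Ideal.Quotient.mk_surjective a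
  obtain ⟨b, rfl⟩ := Ideal.Quotient.mk_surjective b
  rw [← map_mul]
  exact transitionMap_mk I R hmn (a * b) |>.trans <| by
    rw [show (Submodule.Quotient.mk (p := (I ^ m • ⊤ : Ideal R)) (a*b) :
          R ⧸ (I ^ m • ⊤ : Ideal R)) = Ideal.Quotient.mk _ (a*b) from rfl, map_mul]
    exact congrArg₂ (· * ·) (transitionMap_mk I R hmn a).symm (transitionMap_mk I R hmn b).symm

lemma evalₐ_mem_of_mem_ker (n : ℕ) (hn : 1 ≤ n) (y : AdicCompletion I R)
    (hy : y ∈ RingHom.ker (evalₐ I 1)) :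
    evalₐ I n y ∈ Ideal.map (Ideal.Quotient.mk (I ^ n)) I := by
  obtain ⟨f, rfl⟩ := AdicCompletion.mk_surjective I R y
  rw [evalₐ_mk]
  apply Ideal.mem_map_of_mem
  have h1 : evalₐ I 1 (AdicCompletion.mk I R f) = 0 := RingHom.mem_ker.mp hy
  rw [evalₐ_mk] at h1
  have hf1 : f.val 1 ∈ I := by
    simpa using Ideal.Quotient.eq_zero_iff_mem.mp h1
  have heq := AdicCauchySequence.mk_eq_mk (I := I) (M := R) hn f
  have hsub : f.val n - f.val 1 ∈ (I ^ 1 • ⊤ : Submodule R R) :=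
    (Submodule.Quotient.eq _).mp heq
  rw [show (I ^ 1 • ⊤ : Submodule R R) = (I ^ 1 • ⊤ : Ideal R) from rfl,
    smul_top_eq, pow_one] at hsub
  have : f.val n = (f.val n - f.val 1) + f.val 1 := by ring
  rw [this]
  exact I.add_mem hsub hf1

lemma evalₐ_eq_zero_of_mem_pow (n : ℕ) (x : AdicCompletion I R)
    (hx : x ∈ RingHom.ker (evalₐ I 1) ^ n) : evalₐ I n x = 0 := by
  rcases Nat.eq_zero_or_pos n with rfl | hn
  · haveI : Subsingleton (R ⧸ (I ^ 0)) := by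
      rw [pow_zero, Ideal.one_eq_top]
      exact Ideal.Quotient.subsingleton_iff.mpr rfl
    exact Subsingleton.elim _ _
  · have hmap : Ideal.map (evalₐ I n : AdicCompletion I R →+* R ⧸ I ^ n)
        (RingHom.ker (evalₐ I 1)) ≤ Ideal.map (Ideal.Quotient.mk (I ^ n)) I :=
      Ideal.map_le_iff_le_comap.mpr fun y hy => evalₐ_mem_of_mem_ker I n hn y hy
    have h1 : evalₐ I n x ∈ Ideal.map (evalₐ I n : AdicCompletion I R →+* R ⧸ I ^ n)
        (RingHom.ker (evalₐ I 1) ^ n) := Ideal.mem_map_of_mem _ hx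
    rw [Ideal.map_pow] at h1
    have h2 := Ideal.pow_right_mono hmap n h1
    rw [← Ideal.map_pow, Ideal.map_quotient_self] at h2
    exact Ideal.mem_bot.mp h2

variable {I}

lemma isUnit_val {R : Type*} [CommRing R] [IsLocalRing R]
    (x : AdicCompletion (IsLocalRing.maximalIdeal R) R)
    (hx : x.val 1 ≠ 0) (n : ℕ) : IsUnit (x.val n) := by
  rcases Nat.eq_zero_or_pos n with rfl | hn
  · haveI : Subsingleton (R ⧸ ((IsLocalRing.maximalIdeal R) ^ 0 • ⊤ : Ideal R)) := by
      rw [smul_top_eq, pow_zero, Ideal.one_eq_top]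
      exact Ideal.Quotient.subsingleton_iff.mpr rfl
    exact isUnit_of_subsingleton _
  · obtain ⟨b, hb⟩ := Ideal.Quotient.mk_surjective (x.val n)
    have hbI : b ∉ IsLocalRing.maximalIdeal R := by
      intro hmem
      apply hx
      rw [← AdicCompletion.transitionMap_comp_eval_apply _ _ hn x, ← hb]
      rw [show (Ideal.Quotient.mk ((IsLocalRing.maximalIdeal R) ^ n • ⊤ : Ideal R)) b
            = Submodule.Quotient.mk b from rfl, transitionMap_mk]
      rw [Submodule.Quotient.mk_eq_zero, smul_top_eq, pow_one]
      exact hmem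
    have : IsUnit b := IsLocalRing.notMem_maximalIdeal.mp hbI
    rw [← hb]
    exact this.map (Ideal.Quotient.mk _)

lemma isUnit_of_val_one_ne_zero {R : Type*} [CommRing R] [IsLocalRing R]
    (x : AdicCompletion (IsLocalRing.maximalIdeal R) R)
    (hx : x.val 1 ≠ 0) : IsUnit x := by
  have h : ∀ n, IsUnit (x.val n) := isUnit_val x hx
  have hcomp : ∀ {m n : ℕ} (hmn : m ≤ n),
      transitionMap (IsLocalRing.maximalIdeal R) R hmn
          (((h n).unit⁻¹ : _) : R ⧸ ((IsLocalRing.maximalIdeal R) ^ n • ⊤ : Ideal R))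
        = (((h m).unit⁻¹ : _) : R ⧸ ((IsLocalRing.maximalIdeal R) ^ m • ⊤ : Ideal R)) := by
    intro m n hmn
    have e1 : x.val m * transitionMap (IsLocalRing.maximalIdeal R) R hmn
        ((h n).unit⁻¹ : _) = 1 := by
      rw [← AdicCompletion.transitionMap_comp_eval_apply _ _ hmn x, ← transitionMap_mul,
        (h n).mul_val_inv]
      exact transitionMap_mk _ R hmn 1
    have e2 : x.val m * ((h m).unit⁻¹ : _) = 1 := (h m).mul_val_inv
    calc transitionMap (IsLocalRing.maximalIdeal R) R hmn ((h n).unit⁻¹ : _)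
        = (x.val m * ((h m).unit⁻¹ : _)) *
            transitionMap (IsLocalRing.maximalIdeal R) R hmn ((h n).unit⁻¹ : _) := by
          rw [e2, one_mul]
      _ = ((h m).unit⁻¹ : _) * (x.val m *
            transitionMap (IsLocalRing.maximalIdeal R) R hmn ((h n).unit⁻¹ : _)) := by ring
      _ = ((h m).unit⁻¹ : _) := by rw [e1, mul_one]
  refine IsUnit.of_mul_eq_one (a := x) ⟨fun n => ((h n).unit⁻¹ : _), fun {m n} hmn => hcomp hmn⟩ ?_
  apply AdicCompletion.ext
  intro n
  exact (AdicCompletion.val_mul _ n x _).trans ((h n).mul_val_inv.trans (AdicCompletion.val_one _ n).symm)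

end AdicAux


/-- The canonical homomorphism `κ : A → Â_p`, the composite of `algebraMap A A_p` with the
canonical map from `A_p` to its `(p·A_p)`-adic completion. -/
noncomputable def kappaAtPrime {A : Type*} [CommRing A] (p : Ideal A) [p.IsPrime] :
    A →+* AdicCompletion (Ideal.map (algebraMap A (Localization.AtPrime p)) p)
      (Localization.AtPrime p) :=
  (algebraMap (Localization.AtPrime p)
      (AdicCompletion (Ideal.map (algebraMap A (Localization.AtPrime p)) p)
        (Localization.AtPrime p))).comp
    (algebraMap A (Localization.AtPrime p))

/-- The Hausdorff localization `H^A_p = (A/ker κ)_p`: the localization of `A/ker κ` at the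
image of `p` (i.e. at the image of the multiplicative complement of `p`, which is the
complement of the prime ideal `p̄ = p/ker κ` since `ker κ ⊆ p`). -/
abbrev HausdorffLocalization {A : Type*} [CommRing A] (p : Ideal A) [p.IsPrime] : Type _ :=
  Localization (Submonoid.map
    (Ideal.Quotient.mk (RingHom.ker (kappaAtPrime p))).toMonoidHom p.primeCompl)

/-- The canonical homomorphism `η : A → H^A_p`. -/
noncomputable def hausdorffLocalizationMap {A : Type*} [CommRing A] (p : Ideal A)
    [p.IsPrime] : A →+* HausdorffLocalization p :=
  (algebraMap (A ⧸ RingHom.ker (kappaAtPrime p)) (HausdorffLocalization p)).comp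
    (Ideal.Quotient.mk (RingHom.ker (kappaAtPrime p)))

/-- Let `A` be a commutative ring, `p ⊂ A` a prime ideal, and
`η : A → H^A_p` the canonical homomorphism into the Hausdorff localization.  Let `B` be a
Noetherian commutative local ring with maximal ideal `m_B`, let `B̂` be the `m_B`-adic
completion of `B`, and let `m̂_B` be the kernel of the canonical projection `B̂ → B/m_B`.
Then for every ring homomorphism `f : A → B̂` with `f⁻¹(m̂_B) = p` there exists a unique
ring homomorphism `ξ : H^A_p → B̂` with `ξ ∘ η = f`.  (The functor
`L̂_{p⊂A}(B) = {f : A → B̂ | f⁻¹(m̂_B) = p}` on local rings is represented by `H^A_p`.) -/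
theorem hausdorffLocalization_represents_completion_functor
    {A : Type*} [CommRing A] (p : Ideal A) [p.IsPrime]
    {B : Type*} [CommRing B] [IsLocalRing B] [IsNoetherianRing B]
    (f : A →+* AdicCompletion (IsLocalRing.maximalIdeal B) B)
    (hf : Ideal.comap f
        (RingHom.ker (AdicCompletion.evalₐ (IsLocalRing.maximalIdeal B) 1)) = p) :
    ∃! ξ : HausdorffLocalization p →+* AdicCompletion (IsLocalRing.maximalIdeal B) B,
      ξ.comp (hausdorffLocalizationMap p) = f := by

  classical
  -- elements outside p map to units
  have hu : ∀ s ∈ p.primeCompl, IsUnit (f s) := by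
    intro s hs
    have h1 : f s ∉ RingHom.ker (AdicCompletion.evalₐ (IsLocalRing.maximalIdeal B) 1) := by
      intro hmem
      exact hs (hf ▸ Ideal.mem_comap.mpr hmem)
    have h2 : AdicCompletion.evalₐ (IsLocalRing.maximalIdeal B) 1 (f s) ≠ 0 :=
      fun h => h1 (RingHom.mem_ker.mpr h)
    have h3 : (f s).val 1 ≠ 0 :=
      fun h => h2 ((AdicAux.evalₐ_eq_zero_iff _ 1 (f s)).mpr h)
    exact AdicAux.isUnit_of_val_one_ne_zero (f s) h3
  -- kernel of kappa is killed by f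
  have hker : ∀ a ∈ RingHom.ker (kappaAtPrime p), f a = 0 := by
    intro a ha
    have h0 : algebraMap (Localization.AtPrime p)
        (AdicCompletion (Ideal.map (algebraMap A (Localization.AtPrime p)) p)
          (Localization.AtPrime p)) (algebraMap A (Localization.AtPrime p) a) = 0 :=
      RingHom.mem_ker.mp ha
    have hmem : ∀ n : ℕ,
        f a ∈ RingHom.ker (AdicCompletion.evalₐ (IsLocalRing.maximalIdeal B) 1) ^ n := by
      intro n
      have h1 : algebraMap A (Localization.AtPrime p) a ∈
          (Ideal.map (algebraMap A (Localization.AtPrime p)) p) ^ n :=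
        AdicAux.mem_pow_of_algebraMap_eq_zero _ _ h0 n
      rw [← Ideal.map_pow] at h1
      obtain ⟨⟨i, s⟩, his⟩ :=
        (IsLocalization.mem_map_algebraMap_iff p.primeCompl (Localization.AtPrime p)).mp h1
      rw [← map_mul] at his
      obtain ⟨c, hc⟩ :=
        (IsLocalization.eq_iff_exists p.primeCompl (Localization.AtPrime p)).mp his
      -- (c * s) * a ∈ p ^ n
      have ht : ((c : A) * (s : A)) * a ∈ p ^ n := by
        have h2 : ((c : A) * (s : A)) * a = (c : A) * (i : A) := by
          rw [show ((c : A) * (s : A)) * a = (c : A) * (a * (s : A)) by ring]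
          exact hc
        rw [h2]
        exact Ideal.mul_mem_left _ _ i.2
      have hts : (c : A) * (s : A) ∈ p.primeCompl := p.primeCompl.mul_mem c.2 s.2
      have hunit : IsUnit (f ((c : A) * (s : A))) := hu _ hts
      have hfa : f ((c : A) * (s : A)) * f a ∈
          RingHom.ker (AdicCompletion.evalₐ (IsLocalRing.maximalIdeal B) 1) ^ n := by
        rw [← map_mul]
        have h2 : f (((c : A) * (s : A)) * a) ∈ Ideal.map f (p ^ n) :=
          Ideal.mem_map_of_mem f ht
        rw [Ideal.map_pow] at h2
        have h3 : Ideal.map f p ≤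
            RingHom.ker (AdicCompletion.evalₐ (IsLocalRing.maximalIdeal B) 1) :=
          Ideal.map_le_iff_le_comap.mpr (le_of_eq hf.symm)
        exact Ideal.pow_right_mono h3 n h2
      have heq : f a = (hunit.unit⁻¹ : _) * (f ((c : A) * (s : A)) * f a) := by
        rw [← mul_assoc, hunit.val_inv_mul, one_mul]
      rw [heq]
      exact Ideal.mul_mem_left _ _ hfa
    exact AdicAux.eq_zero_of_forall_evalₐ _ (f a) fun n =>
      AdicAux.evalₐ_eq_zero_of_mem_pow _ n (f a) (hmem n)
  -- the induced map on the quotient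
  have hfbar_mk : ∀ a : A,
      Ideal.Quotient.lift (RingHom.ker (kappaAtPrime p)) f hker
        (Ideal.Quotient.mk _ a) = f a := fun a => Ideal.Quotient.lift_mk _ _ _
  have hunits : ∀ y : (Submonoid.map
      (Ideal.Quotient.mk (RingHom.ker (kappaAtPrime p))).toMonoidHom p.primeCompl),
      IsUnit (Ideal.Quotient.lift (RingHom.ker (kappaAtPrime p)) f hker y) := by
    rintro ⟨y, s, hs, rfl⟩
    show IsUnit (Ideal.Quotient.lift (RingHom.ker (kappaAtPrime p)) f hker
      (Ideal.Quotient.mk _ s))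
    rw [hfbar_mk]
    exact hu s hs
  refine ⟨IsLocalization.lift (S := HausdorffLocalization p) hunits, ?_, ?_⟩
  · refine RingHom.ext fun a => ?_
    show IsLocalization.lift hunits
      (algebraMap (A ⧸ RingHom.ker (kappaAtPrime p)) (HausdorffLocalization p)
        (Ideal.Quotient.mk _ a)) = f a
    rw [IsLocalization.lift_eq, hfbar_mk]
  · intro ξ' hξ'
    apply IsLocalization.ringHom_ext (Submonoid.map
      (Ideal.Quotient.mk (RingHom.ker (kappaAtPrime p))).toMonoidHom p.primeCompl)
    refine RingHom.ext fun z => ?_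
    obtain ⟨a, rfl⟩ := Ideal.Quotient.mk_surjective z
    show ξ' (algebraMap (A ⧸ RingHom.ker (kappaAtPrime p)) (HausdorffLocalization p)
        (Ideal.Quotient.mk _ a)) = _
    rw [RingHom.comp_apply, IsLocalization.lift_eq, hfbar_mk]
    exact RingHom.congr_fun hξ' a
end

section
/- Let A be a commutative ring and p ⊂ A a prime ideal, and let H^A_p = (A/ker κ)_{\bar p} be the Hausdorff localization of A in p, with canonical homomorphism η : A → H^A_p. Let B be a Noetherian commutative ring with a prime ideal q ⊂ B, let \hat B_q denote the (q·B_q)-adic completion of the localization B_q, and let \hat m_q denote the kernel of the canonical projection \hat B_q → B_q/(q·B_q). Then for every ring homomorphism f : A → \hat B_q with f⁻¹(\hat m_q) = p there exists a unique ring homomorphism ξ : H^A_p → \hat B_q with ξ ∘ η = f. (The functor on pointed commutative rings sending (q ⊂ B) to {f : A → \hat B_q | f⁻¹(\hat m_q) = p} is represented by H^A_p.) -/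
open AdicCompletion

open AdicCompletion

section Aux
variable {R : Type*} [CommRing R] (I : Ideal R)

theorem evalₐ_eq_equiv (n : ℕ) (x : AdicCompletion I R) :
    evalₐ I n x = (Ideal.quotientEquivAlgOfEq R
      (show (I ^ n • ⊤ : Ideal R) = I ^ n by ext x; simp)) (x.val n) := rfl

theorem val_eq_zero_of_evalₐ {n : ℕ} {x : AdicCompletion I R}
    (h : evalₐ I n x = 0) : x.val n = 0 := by
  rw [evalₐ_eq_equiv] at h
  exact (EmbeddingLike.map_eq_zero_iff).mp h

theorem evalₐ_eq_zero_of_val {n : ℕ} {x : AdicCompletion I R}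
    (h : x.val n = 0) : evalₐ I n x = 0 := by
  rw [evalₐ_eq_equiv, h, _root_.map_zero]

theorem evalₐ_algebraMap' (n : ℕ) (r : R) :
    evalₐ I n (algebraMap R (AdicCompletion I R) r) = Ideal.Quotient.mk (I ^ n) r := by
  rw [(evalₐ I n).commutes, Ideal.Quotient.algebraMap_eq]

theorem val_algebraMap' (n : ℕ) (r : R) :
    (algebraMap R (AdicCompletion I R) r).val n =
      Submodule.Quotient.mk r := rfl

end Aux

theorem isUnit_adicCompletion_of_evalₐ_ne_zero {R : Type*} [CommRing R] {I : Ideal R}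
    (hI : ∀ r : R, r ∉ I → IsUnit r)
    {x : AdicCompletion I R} (hx : evalₐ I 1 x ≠ 0) : IsUnit x := by
  have hv1 : x.val 1 ≠ 0 := fun h => hx (evalₐ_eq_zero_of_val I h)
  have hu : ∀ n : ℕ, IsUnit (x.val n) := by
    intro n
    rcases n with _ | k
    · have hsub : Subsingleton (R ⧸ (I ^ 0 • ⊤ : Submodule R R)) := by
        rw [Submodule.Quotient.subsingleton_iff]
        simp
      exact @isUnit_of_subsingleton _ _ hsub _
    · obtain ⟨r, hr⟩ := Submodule.Quotient.mk_surjective _ (x.val (k + 1))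
      have h1 : x.val 1 = Submodule.Quotient.mk r := by
        rw [← x.property (Nat.le_add_left 1 k), ← hr]
        rfl
      have hrI : r ∉ I := by
        intro hrI
        apply hv1
        rw [h1, Submodule.Quotient.mk_eq_zero]
        have : (I ^ 1 • ⊤ : Submodule R R) = I := by
          rw [pow_one, smul_eq_mul, Ideal.mul_top]
        rw [this]; exact hrI
      have : x.val (k + 1) = Ideal.Quotient.mk (I ^ (k + 1) • ⊤ : Ideal R) r := hr.symm
      rw [this]
      exact (hI r hrI).map _
  refine isUnit_iff_exists_inv.mpr ⟨⟨fun n => ↑(hu n).unit⁻¹, ?_⟩, ?_⟩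
  · intro m n hmn
    have h2 : transitionMap I R hmn (x.val n) = x.val m := x.property hmn
    apply (hu m).mul_left_cancel
    show x.val m * transitionMap I R hmn ↑(hu n).unit⁻¹ = x.val m * ↑(hu m).unit⁻¹
    rw [(hu m).mul_val_inv, ← h2, ← transitionMap_map_mul, (hu n).mul_val_inv,
      transitionMap_map_one]
  · ext n
    show x.val n * ↑(hu n).unit⁻¹ = 1
    exact (hu n).mul_val_inv

theorem eq_zero_of_mem_ker_pow {R : Type*} [CommRing R] (I : Ideal R)
    {x : AdicCompletion I R}
    (hx : ∀ n : ℕ, x ∈ (RingHom.ker (evalₐ I 1)) ^ n) : x = 0 := by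
  ext n
  rw [AdicCompletion.val_zero]
  rcases n with _ | k
  · have hsub : Subsingleton (R ⧸ (I ^ 0 • ⊤ : Submodule R R)) := by
      rw [Submodule.Quotient.subsingleton_iff]
      simp
    exact Subsingleton.elim _ _
  set n := k + 1 with hn
  apply val_eq_zero_of_evalₐ I
  have hmap : Ideal.map (evalₐ I n) (RingHom.ker (evalₐ I 1)) ≤
      Ideal.map (Ideal.Quotient.mk (I ^ n)) I := by
    rw [Ideal.map_le_iff_le_comap]
    intro z hz
    obtain ⟨r, hr⟩ := Submodule.Quotient.mk_surjective _ (z.val n)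
    have h1 : z.val 1 = Submodule.Quotient.mk r := by
      rw [← z.property (Nat.le_add_left 1 k), ← hr]; rfl
    have hrI : r ∈ I := by
      have hz1 : z.val 1 = 0 := val_eq_zero_of_evalₐ I hz
      rw [h1, Submodule.Quotient.mk_eq_zero] at hz1
      have : (I ^ 1 • ⊤ : Submodule R R) = I := by
        rw [pow_one, smul_eq_mul, Ideal.mul_top]
      rwa [this] at hz1
    rw [Ideal.mem_comap]
    have : evalₐ I n z = Ideal.Quotient.mk (I ^ n) r := by
      rw [evalₐ_eq_equiv, ← hr]
      rfl
    rw [this]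
    exact Ideal.mem_map_of_mem _ hrI
  have h2 : evalₐ I n x ∈ (Ideal.map (Ideal.Quotient.mk (I ^ n)) I) ^ n := by
    apply Ideal.pow_right_mono hmap n
    rw [← Ideal.map_pow]
    exact Ideal.mem_map_of_mem _ (hx n)
  rw [← Ideal.map_pow, Ideal.map_quotient_self] at h2
  simpa using h2

set_option maxHeartbeats 4000000


/-- Let `A` be a commutative ring, `p ⊂ A` a prime ideal, and
`η : A → H^A_p` the canonical homomorphism into the Hausdorff localization.  Let `B` be a
Noetherian commutative ring with a prime ideal `q ⊂ B`, let `B̂_q` be the `(q·B_q)`-adic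
completion of the localization `B_q`, and let `m̂_q` be the kernel of the canonical
projection `B̂_q → B_q/(q·B_q)`.  Then for every ring homomorphism `f : A → B̂_q` with
`f⁻¹(m̂_q) = p` there exists a unique ring homomorphism `ξ : H^A_p → B̂_q` with
`ξ ∘ η = f`.  (The functor on pointed commutative rings sending `(q ⊂ B)` to
`{f : A → B̂_q | f⁻¹(m̂_q) = p}` is represented by `H^A_p`.) -/
theorem hausdorffLocalization_represents_pointed_completion_functor
    {A : Type*} [CommRing A] (p : Ideal A) [p.IsPrime]
    {B : Type*} [CommRing B] [IsNoetherianRing B] (q : Ideal B) [q.IsPrime]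
    (f : A →+* AdicCompletion
        (Ideal.map (algebraMap B (Localization.AtPrime q)) q) (Localization.AtPrime q))
    (hf : Ideal.comap f
        (RingHom.ker (AdicCompletion.evalₐ
          (Ideal.map (algebraMap B (Localization.AtPrime q)) q) 1)) = p) :
    ∃! ξ : HausdorffLocalization p →+*
        AdicCompletion (Ideal.map (algebraMap B (Localization.AtPrime q)) q)
          (Localization.AtPrime q),
      ξ.comp (hausdorffLocalizationMap p) = f := by
  classical
  have hIu : ∀ r : Localization.AtPrime q, r ∉ (Ideal.map (algebraMap B (Localization.AtPrime q)) q) → IsUnit r := by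
    intro r hr
    rw [Localization.AtPrime.map_eq_maximalIdeal] at hr
    exact IsLocalRing.notMem_maximalIdeal.mp hr
  have hunit : ∀ a ∈ p.primeCompl, IsUnit (f a) := by
    intro a ha
    apply isUnit_adicCompletion_of_evalₐ_ne_zero hIu
    intro h0
    exact ha (hf ▸ Ideal.mem_comap.mpr (RingHom.mem_ker.mpr h0))
  have hunit' : ∀ y : p.primeCompl, IsUnit (f y) := fun y => hunit y y.2
  let g : Localization.AtPrime p →+* _ := IsLocalization.lift (M := p.primeCompl) hunit'
  have hg : ∀ a : A, g (algebraMap A (Localization.AtPrime p) a) = f a :=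
    fun a => IsLocalization.lift_eq hunit' a
  have hgmap : Ideal.map g (Ideal.map (algebraMap A (Localization.AtPrime p)) p) ≤ RingHom.ker (AdicCompletion.evalₐ (Ideal.map (algebraMap B (Localization.AtPrime q)) q) 1) := by
    rw [Ideal.map_map, IsLocalization.lift_comp, Ideal.map_le_iff_le_comap, hf]
  have hker : ∀ a ∈ RingHom.ker (kappaAtPrime p), f a = 0 := by
    intro a ha
    rw [RingHom.mem_ker, kappaAtPrime, RingHom.comp_apply] at ha
    have hmem : ∀ n : ℕ, algebraMap A (Localization.AtPrime p) a ∈ (Ideal.map (algebraMap A (Localization.AtPrime p)) p) ^ n := by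
      intro n
      have h0 : (algebraMap (Localization.AtPrime p)
          (AdicCompletion (Ideal.map (algebraMap A (Localization.AtPrime p)) p) (Localization.AtPrime p))
          (algebraMap A (Localization.AtPrime p) a)).val n = 0 := by
        rw [ha]; rfl
      rw [val_algebraMap', Submodule.Quotient.mk_eq_zero] at h0
      have heq : ((Ideal.map (algebraMap A (Localization.AtPrime p)) p) ^ n • ⊤ :
          Submodule (Localization.AtPrime p) (Localization.AtPrime p)) = (Ideal.map (algebraMap A (Localization.AtPrime p)) p) ^ n := by
        rw [smul_eq_mul, Ideal.mul_top]
      rwa [heq] at h0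
    have hfa : ∀ n : ℕ, f a ∈ (RingHom.ker (AdicCompletion.evalₐ (Ideal.map (algebraMap B (Localization.AtPrime q)) q) 1)) ^ n := by
      intro n
      rw [← hg a]
      have hmm : g (algebraMap A (Localization.AtPrime p) a) ∈
          Ideal.map g ((Ideal.map (algebraMap A (Localization.AtPrime p)) p) ^ n) := Ideal.mem_map_of_mem _ (hmem n)
      rw [Ideal.map_pow] at hmm
      exact Ideal.pow_right_mono hgmap n hmm
    exact eq_zero_of_mem_ker_pow (Ideal.map (algebraMap B (Localization.AtPrime q)) q) hfa
  let f1 : A ⧸ RingHom.ker (kappaAtPrime p) →+* _ :=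
    Ideal.Quotient.lift _ f hker
  have hSu : ∀ s : (Submonoid.map
      (Ideal.Quotient.mk (RingHom.ker (kappaAtPrime p))).toMonoidHom p.primeCompl),
      IsUnit (f1 s) := by
    rintro ⟨_, a, ha, rfl⟩
    exact hunit a ha
  let ξ : HausdorffLocalization p →+* _ := IsLocalization.lift (M := (Submonoid.map
      (Ideal.Quotient.mk (RingHom.ker (kappaAtPrime p))).toMonoidHom p.primeCompl)) hSu
  have hcomp : ξ.comp (hausdorffLocalizationMap p) = f := by
    rw [hausdorffLocalizationMap, ← RingHom.comp_assoc, IsLocalization.lift_comp hSu]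
    exact RingHom.ext fun a => Ideal.Quotient.lift_mk (RingHom.ker (kappaAtPrime p)) f hker
  refine ⟨ξ, hcomp, ?_⟩
  intro ξ' hξ'
  have hext : ξ'.comp (algebraMap (A ⧸ RingHom.ker (kappaAtPrime p)) (HausdorffLocalization p))
      = ξ.comp (algebraMap (A ⧸ RingHom.ker (kappaAtPrime p)) (HausdorffLocalization p)) := by
    refine RingHom.ext fun b => ?_
    obtain ⟨a, rfl⟩ := Ideal.Quotient.mk_surjective b
    have h1 := RingHom.congr_fun hξ' a
    have h2 := RingHom.congr_fun hcomp a
    exact h1.trans h2.symm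
  exact IsLocalization.ringHom_ext (Submonoid.map
      (Ideal.Quotient.mk (RingHom.ker (kappaAtPrime p))).toMonoidHom p.primeCompl) hext
end

section
/- Let A be an associative unital ring, M a nonzero abelian group, and η : A → End_ℤ(M) a ring homomorphism making M a simple module (the only additive subgroups of M stable under η(a) for all a ∈ A are 0 and M). Let D_M = {f ∈ End_ℤ(M) | f·η(a) = η(a)·f for all a ∈ A} be the ring of A-module endomorphisms of M, and let A_M ⊆ End_ℤ(M) be the subring generated by the image of η together with the inverses of all nonzero elements of (range η) ∩ D_M (such elements are bijective by Schur's lemma, with A-linear inverses). Then: (i) the corestriction η_c : A → A_M sends every s ∈ A with η(s) ∈ D_M \ {0} to a unit of A_M; and (ii) for every associative unital ring B and ring homomorphism κ : A → B such that κ(s) is a unit in B for every s ∈ A with η(s) ∈ D_M \ {0}, and such that ker η_c ⊆ ker κ, there exists a unique ring homomorphism ρ : A_M → B with ρ ∘ η_c = κ. -/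
section genericLFR
variable {R : Type*} [Ring R]

/-- If `g` is a two-sided inverse of `u` and `x` commutes with `u`, then `x` commutes
with `g`. -/
theorem LFR.inv_comm {u g x : R} (h1 : g * u = 1) (h2 : u * g = 1)
    (hx : x * u = u * x) : g * x = x * g := by
  calc g * x = g * x * (u * g) := by rw [h2, mul_one]
    _ = g * (x * u) * g := by simp only [mul_assoc]
    _ = g * u * (x * g) := by rw [hx]; simp only [mul_assoc]
    _ = x * g := by rw [h1, one_mul]

variable {u u' g g' p p' q : R}

theorem LFR.prod_inv_left (h1 : g * u = 1) (h2 : u * g = 1) (h1' : g' * u' = 1)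
    (h2' : u' * g' = 1) (huu' : u * u' = u' * u) : (g * g') * (u * u') = 1 := by
  have hg'u : g' * u = u * g' := LFR.inv_comm h1' h2' huu'
  calc g * g' * (u * u') = g * (g' * u) * u' := by simp only [mul_assoc]
    _ = g * u * (g' * u') := by rw [hg'u]; simp only [mul_assoc]
    _ = 1 := by rw [h1, h1', mul_one]

theorem LFR.prod_inv_right (h1 : g * u = 1) (h2 : u * g = 1) (h1' : g' * u' = 1)
    (h2' : u' * g' = 1) (huu' : u * u' = u' * u) : (u * u') * (g * g') = 1 := by
  have hgu' : g * u' = u' * g := LFR.inv_comm h1 h2 huu'.symm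
  calc u * u' * (g * g') = u * (u' * g) * g' := by simp only [mul_assoc]
    _ = u * g * (u' * g') := by rw [← hgu']; simp only [mul_assoc]
    _ = 1 := by rw [h2, h2', mul_one]

theorem LFR.frac_cross (h1 : g * u = 1) (h2 : u * g = 1) (h1' : g' * u' = 1)
    (h2' : u' * g' = 1) (huu' : u * u' = u' * u) (h : p * g = p' * g') :
    p * u' = p' * u := by
  calc p * u' = p * (g * u) * u' := by rw [h1, mul_one]
    _ = p * g * (u * u') := by simp only [mul_assoc]
    _ = p' * g' * (u' * u) := by rw [h, huu']
    _ = p' * (g' * u') * u := by simp only [mul_assoc]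
    _ = p' * u := by rw [h1', mul_one]

theorem LFR.frac_wd (h1 : g * u = 1) (h2 : u * g = 1) (h1' : g' * u' = 1)
    (h2' : u' * g' = 1) (huu' : u * u' = u' * u) (h : p * u' = p' * u) :
    p * g = p' * g' := by
  have hgu' : g * u' = u' * g := LFR.inv_comm h1 h2 huu'.symm
  calc p * g = p * g * (u' * g') := by rw [h2', mul_one]
    _ = p * (g * u') * g' := by simp only [mul_assoc]
    _ = p * u' * (g * g') := by rw [hgu']; simp only [mul_assoc]
    _ = p' * u * (g * g') := by rw [h]
    _ = p' * (u * g) * g' := by simp only [mul_assoc]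
    _ = p' * g' := by rw [h2, mul_one]

theorem LFR.frac_add (h1 : g * u = 1) (h2 : u * g = 1) (h1' : g' * u' = 1)
    (h2' : u' * g' = 1) (huu' : u * u' = u' * u) :
    (p * u' + p' * u) * (g * g') = p * g + p' * g' := by
  have hgu' : g * u' = u' * g := LFR.inv_comm h1 h2 huu'.symm
  have hgg' : g * g' = g' * g := (LFR.inv_comm h1' h2' hgu').symm
  have t1 : p * u' * (g * g') = p * g := by
    calc p * u' * (g * g') = p * u' * (g' * g) := by rw [hgg']
      _ = p * (u' * g') * g := by simp only [mul_assoc]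
      _ = p * g := by rw [h2', mul_one]
  have t2 : p' * u * (g * g') = p' * g' := by
    calc p' * u * (g * g') = p' * (u * g) * g' := by simp only [mul_assoc]
      _ = p' * g' := by rw [h2, mul_one]
  rw [add_mul, t1, t2]

theorem LFR.frac_mul (h1 : g * u = 1) (h2 : u * g = 1) (hq : q * u = u * q) :
    (p * g) * (q * g') = (p * q) * (g * g') := by
  have hgq : g * q = q * g := LFR.inv_comm h1 h2 hq
  calc p * g * (q * g') = p * (g * q) * g' := by simp only [mul_assoc]
    _ = p * q * (g * g') := by rw [hgq]; simp only [mul_assoc]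

theorem LFR.inverse_eq {a b : R} (h1 : b * a = 1) (h2 : a * b = 1) :
    Ring.inverse a = b := by
  rw [show a = ((⟨a, b, h2, h1⟩ : Rˣ) : R) from rfl, Ring.inverse_unit]
  rfl
end genericLFR

/-- `M` is a simple module over `A` via the structure map `η : A → End_ℤ(M)`: `M` is nonzero
and the only additive subgroups of `M` stable under `η a` for all `a ∈ A` are `0` and `M`. -/
def IsSimpleStructureMap {A M : Type*} [Ring A] [AddCommGroup M]
    (η : A →+* AddMonoid.End M) : Prop :=
  Nontrivial M ∧
    ∀ N : AddSubgroup M, (∀ a : A, ∀ x ∈ N, η a x ∈ N) → N = ⊥ ∨ N = ⊤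

/-- `D_M`: the centralizer of the range of `η` in `End_ℤ(M)`, i.e. the ring of `A`-linear
endomorphisms of `M`. -/
def moduleCentralizer {A M : Type*} [Ring A] [AddCommGroup M]
    (η : A →+* AddMonoid.End M) : Subring (AddMonoid.End M) :=
  Subring.centralizer (Set.range η)

/-- The local function ring `A_M ⊆ End_ℤ(M)`: the subring generated by the image of `η`
together with the (two-sided) inverses of all nonzero elements of `(range η) ∩ D_M`. -/
def localFunctionRing {A M : Type*} [Ring A] [AddCommGroup M]
    (η : A →+* AddMonoid.End M) : Subring (AddMonoid.End M) :=
  Subring.closure (Set.range η ∪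
    {g : AddMonoid.End M | ∃ s : A, η s ∈ moduleCentralizer η ∧ η s ≠ 0 ∧
      g * η s = 1 ∧ η s * g = 1})

/-- The corestriction `η_c : A → A_M` of `η` to the local function ring. -/
def localFunctionRingMap {A M : Type*} [Ring A] [AddCommGroup M]
    (η : A →+* AddMonoid.End M) : A →+* localFunctionRing η :=
  η.codRestrict (localFunctionRing η) fun a =>
    Subring.subset_closure (Set.mem_union_left _ ⟨a, rfl⟩)

namespace LFR
variable {A M : Type*} [Ring A] [AddCommGroup M] (η : A →+* AddMonoid.End M)

/-- `t` is a "good denominator": `η t` is a nonzero `A`-linear endomorphism. -/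
def Good (t : A) : Prop := η t ∈ moduleCentralizer η ∧ η t ≠ 0

variable {η}

theorem Good.comm {t : A} (ht : Good η t) (a : A) : η a * η t = η t * η a :=
  Subring.mem_centralizer_iff.mp ht.1 _ ⟨a, rfl⟩

theorem one_ne_zero_End (hM : IsSimpleStructureMap η) :
    (1 : AddMonoid.End M) ≠ 0 := by
  obtain ⟨x, hx⟩ := @exists_ne M (hM.1) 0
  intro h
  exact hx (by simpa using DFunLike.congr_fun h x)

theorem good_one (hM : IsSimpleStructureMap η) : Good η (1 : A) :=
  ⟨by rw [map_one]; exact Subring.one_mem _, by rw [map_one]; exact one_ne_zero_End hM⟩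

/-- Schur: a nonzero `A`-linear endomorphism of a simple module is bijective. -/
theorem Good.bijective (hM : IsSimpleStructureMap η) {t : A} (ht : Good η t) :
    Function.Bijective (η t) := by
  constructor
  · have hker : ∀ a : A, ∀ x ∈ (η t).ker, η a x ∈ (η t).ker := by
      intro a x hx
      change η t x = 0 at hx
      change η t (η a x) = 0
      have : (η t * η a) x = (η a * η t) x := by rw [ht.comm a]
      simpa [hx] using this
    rcases hM.2 _ hker with h | h
    · exact (AddMonoidHom.ker_eq_bot_iff _).mp h
    · exfalso; apply ht.2
      refine DFunLike.ext _ _ fun x => ?_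
      have : x ∈ (η t).ker := h ▸ AddSubgroup.mem_top x
      exact AddMonoidHom.mem_ker.mp this
  · have hrange : ∀ a : A, ∀ x ∈ (η t).range, η a x ∈ (η t).range := by
      rintro a x ⟨y, rfl⟩
      refine ⟨η a y, ?_⟩
      have : (η t * η a) y = (η a * η t) y := by rw [ht.comm a]
      exact this
    rcases hM.2 _ hrange with h | h
    · exfalso; apply ht.2
      refine DFunLike.ext _ _ fun x => ?_
      have : η t x ∈ (η t).range := ⟨x, rfl⟩
      rw [h] at this
      simpa using this
    · exact AddMonoidHom.range_eq_top.mp h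

/-- A two-sided inverse for `η t` when `t` is good. -/
theorem Good.exists_inv (hM : IsSimpleStructureMap η) {t : A} (ht : Good η t) :
    ∃ g : AddMonoid.End M, g * η t = 1 ∧ η t * g = 1 := by
  let e := AddEquiv.ofBijective (η t) (ht.bijective hM)
  refine ⟨(e.symm : M →+ M), ?_, ?_⟩ <;> refine DFunLike.ext _ _ fun x => ?_
  · exact e.symm_apply_apply x
  · exact e.apply_symm_apply x

variable (η) in
/-- `x` is represented as the fraction `η a * (η t)⁻¹` with inverse witness `g`. -/
def Rep (x : AddMonoid.End M) (a t : A) (g : AddMonoid.End M) : Prop :=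
  Good η t ∧ g * η t = 1 ∧ η t * g = 1 ∧ x = η a * g

theorem rep_triv (hM : IsSimpleStructureMap η) (a : A) : Rep η (η a) a 1 1 :=
  ⟨good_one hM, by rw [map_one, mul_one], by rw [map_one, mul_one], by rw [mul_one]⟩

theorem good_mul {t t' : A} {g g' : AddMonoid.End M} (hM : IsSimpleStructureMap η)
    (ht : Good η t) (ht' : Good η t')
    (h1 : g * η t = 1) (h2 : η t * g = 1) (h1' : g' * η t' = 1) (h2' : η t' * g' = 1) :
    Good η (t * t') := by
  have huu' : η t * η t' = η t' * η t := ht'.comm t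
  constructor
  · rw [map_mul]; exact Subring.mul_mem _ ht.1 ht'.1
  · intro h
    have := prod_inv_right h1 h2 h1' h2' huu'
    rw [← map_mul, h, zero_mul] at this
    exact one_ne_zero_End hM this.symm

theorem rep_mul {x x' : AddMonoid.End M} {a t a' t' : A} {g g' : AddMonoid.End M}
    (hM : IsSimpleStructureMap η) (hx : Rep η x a t g) (hx' : Rep η x' a' t' g') :
    Rep η (x * x') (a * a') (t * t') (g * g') := by
  obtain ⟨ht, h1, h2, hxe⟩ := hx
  obtain ⟨ht', h1', h2', hxe'⟩ := hx'
  have huu' : η t * η t' = η t' * η t := ht'.comm t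
  refine ⟨good_mul hM ht ht' h1 h2 h1' h2', ?_, ?_, ?_⟩
  · rw [map_mul]; exact prod_inv_left h1 h2 h1' h2' huu'
  · rw [map_mul]; exact prod_inv_right h1 h2 h1' h2' huu'
  · rw [hxe, hxe', map_mul]
    exact frac_mul h1 h2 (ht.comm a')

theorem rep_add {x x' : AddMonoid.End M} {a t a' t' : A} {g g' : AddMonoid.End M}
    (hM : IsSimpleStructureMap η) (hx : Rep η x a t g) (hx' : Rep η x' a' t' g') :
    Rep η (x + x') (a * t' + a' * t) (t * t') (g * g') := by
  obtain ⟨ht, h1, h2, hxe⟩ := hx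
  obtain ⟨ht', h1', h2', hxe'⟩ := hx'
  have huu' : η t * η t' = η t' * η t := ht'.comm t
  refine ⟨good_mul hM ht ht' h1 h2 h1' h2', ?_, ?_, ?_⟩
  · rw [map_mul]; exact prod_inv_left h1 h2 h1' h2' huu'
  · rw [map_mul]; exact prod_inv_right h1 h2 h1' h2' huu'
  · rw [hxe, hxe', map_add, map_mul, map_mul]
    exact (frac_add h1 h2 h1' h2' huu').symm

theorem rep_neg {x : AddMonoid.End M} {a t : A} {g : AddMonoid.End M}
    (hx : Rep η x a t g) : Rep η (-x) (-a) t g := by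
  obtain ⟨ht, h1, h2, hxe⟩ := hx
  exact ⟨ht, h1, h2, by rw [hxe, map_neg, neg_mul]⟩

/-- Every element of the local function ring is a fraction `η a * (η t)⁻¹`. -/
theorem rep_exists (hM : IsSimpleStructureMap η) {x : AddMonoid.End M}
    (hx : x ∈ localFunctionRing η) : ∃ a t g, Rep η x a t g := by
  induction hx using Subring.closure_induction with
  | mem y hy =>
    rcases hy with ⟨a, rfl⟩ | ⟨s, hs1, hs2, hg1, hg2⟩
    · exact ⟨a, 1, 1, rep_triv hM a⟩
    · exact ⟨1, s, y, ⟨hs1, hs2⟩, hg1, hg2, by rw [map_one, one_mul]⟩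
  | zero => exact ⟨0, 1, 1, good_one hM, by simp, by simp, by simp⟩
  | one => exact ⟨1, 1, 1, map_one η ▸ rep_triv hM 1⟩
  | add x y hx hy ihx ihy =>
    obtain ⟨a, t, g, hr⟩ := ihx
    obtain ⟨a', t', g', hr'⟩ := ihy
    exact ⟨_, _, _, rep_add hM hr hr'⟩
  | neg x hx ihx =>
    obtain ⟨a, t, g, hr⟩ := ihx
    exact ⟨_, _, _, rep_neg hr⟩
  | mul x y hx hy ihx ihy =>
    obtain ⟨a, t, g, hr⟩ := ihx
    obtain ⟨a', t', g', hr'⟩ := ihy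
    exact ⟨_, _, _, rep_mul hM hr hr'⟩

set_option maxHeartbeats 1000000 in
set_option synthInstance.maxHeartbeats 400000 in
/-- Two ring homomorphisms out of the local function ring that agree on the image of
`η_c` are equal. -/
theorem hom_ext {B : Type*} [Ring B] {ρ₁ ρ₂ : localFunctionRing η →+* B}
    (h : ρ₁.comp (localFunctionRingMap η) = ρ₂.comp (localFunctionRingMap η)) :
    ρ₁ = ρ₂ := by
  have h' : ∀ a : A, ρ₁ (localFunctionRingMap η a) = ρ₂ (localFunctionRingMap η a) :=
    fun a => RingHom.congr_fun h a
  refine RingHom.ext fun x => ?_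
  obtain ⟨w, hw⟩ := x
  induction hw using Subring.closure_induction with
  | mem y hy =>
    rcases hy with ⟨a, rfl⟩ | ⟨s, hs1, hs2, hg1, hg2⟩
    · exact h' a
    · set e : localFunctionRing η := ⟨y, Subring.subset_closure
        (Set.mem_union_right _ ⟨s, hs1, hs2, hg1, hg2⟩)⟩ with he
      have hes : e * localFunctionRingMap η s = 1 := Subtype.ext hg1
      have hse : localFunctionRingMap η s * e = 1 := Subtype.ext hg2
      show ρ₁ e = ρ₂ e
      have k1 : ρ₁ e * ρ₂ (localFunctionRingMap η s) = 1 := by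
        rw [← h' s, ← map_mul, hes, map_one]
      have k2 : ρ₂ (localFunctionRingMap η s) * ρ₂ e = 1 := by
        rw [← map_mul, hse, map_one]
      calc ρ₁ e = ρ₁ e * (ρ₂ (localFunctionRingMap η s) * ρ₂ e) := by rw [k2, mul_one]
        _ = (ρ₁ e * ρ₂ (localFunctionRingMap η s)) * ρ₂ e := by rw [mul_assoc]
        _ = ρ₂ e := by rw [k1, one_mul]
  | zero => show ρ₁ 0 = ρ₂ 0; rw [map_zero, map_zero]
  | one => show ρ₁ 1 = ρ₂ 1; rw [map_one, map_one]
  | add x y hx hy ihx ihy =>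
    show ρ₁ (⟨x, hx⟩ + ⟨y, hy⟩) = ρ₂ (⟨x, hx⟩ + ⟨y, hy⟩)
    rw [map_add, map_add, ihx, ihy]
  | neg x hx ihx =>
    show ρ₁ (-⟨x, hx⟩) = ρ₂ (-⟨x, hx⟩)
    rw [map_neg, map_neg, ihx]
  | mul x y hx hy ihx ihy =>
    show ρ₁ (⟨x, hx⟩ * ⟨y, hy⟩) = ρ₂ (⟨x, hx⟩ * ⟨y, hy⟩)
    rw [map_mul, map_mul, ihx, ihy]

end LFR

set_option maxHeartbeats 1000000 in
set_option synthInstance.maxHeartbeats 400000 in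
/-- Let `A` be an associative unital ring, `M` a nonzero abelian group and
`η : A → End_ℤ(M)` a ring homomorphism making `M` a simple module.  Let `A_M ⊆ End_ℤ(M)` be
the local function ring of `A` in `M`, with corestriction `η_c : A → A_M`.  Then:
(i) `η_c` sends every `s ∈ A` with `η s ∈ D_M \ {0}` to a unit of `A_M`; and
(ii) for every ring `B` and homomorphism `κ : A → B` such that `κ s` is a unit whenever
`η s ∈ D_M \ {0}`, and such that `ker η_c ⊆ ker κ`, there is a unique ring homomorphism
`ρ : A_M → B` with `ρ ∘ η_c = κ`. -/
theorem localFunctionRing_universal_property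
    {A M : Type*} [Ring A] [AddCommGroup M]
    (η : A →+* AddMonoid.End M) (hM : IsSimpleStructureMap η) :
    (∀ s : A, η s ∈ moduleCentralizer η → η s ≠ 0 →
      IsUnit (localFunctionRingMap η s)) ∧
    (∀ (B : Type*) [Ring B] (κ : A →+* B),
      (∀ s : A, η s ∈ moduleCentralizer η → η s ≠ 0 → IsUnit (κ s)) →
      RingHom.ker (localFunctionRingMap η) ≤ RingHom.ker κ →
      ∃! ρ : localFunctionRing η →+* B, ρ.comp (localFunctionRingMap η) = κ) := by
  constructor
  · intro s hs1 hs2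
    obtain ⟨g, hg1, hg2⟩ := LFR.Good.exists_inv hM (⟨hs1, hs2⟩ : LFR.Good η s)
    have hgmem : g ∈ localFunctionRing η :=
      Subring.subset_closure (Set.mem_union_right _ ⟨s, hs1, hs2, hg1, hg2⟩)
    exact ⟨⟨localFunctionRingMap η s, ⟨g, hgmem⟩, Subtype.ext hg2, Subtype.ext hg1⟩, rfl⟩
  · intro B _ κ hκ hker
    -- translate the kernel condition
    have hker' : ∀ a : A, η a = 0 → κ a = 0 := fun a h =>
      RingHom.mem_ker.mp (hker (RingHom.mem_ker.mpr (Subtype.ext h)))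
    have κ_congr : ∀ a b : A, η a = η b → κ a = κ b := by
      intro a b h
      have : η (a - b) = 0 := by rw [map_sub, h, sub_self]
      have := hker' _ this
      rw [map_sub, sub_eq_zero] at this
      exact this
    -- canonical inverses in B
    set v : A → B := fun t => Ring.inverse (κ t) with hv
    have hv1 : ∀ t : A, LFR.Good η t → v t * κ t = 1 := fun t ht =>
      Ring.inverse_mul_cancel _ (hκ t ht.1 ht.2)
    have hv2 : ∀ t : A, LFR.Good η t → κ t * v t = 1 := fun t ht =>
      Ring.mul_inverse_cancel _ (hκ t ht.1 ht.2)
    have hκcomm : ∀ (t a : A), LFR.Good η t → κ a * κ t = κ t * κ a := by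
      intro t a ht
      rw [← map_mul, ← map_mul]
      exact κ_congr _ _ (by rw [map_mul, map_mul]; exact ht.comm a)
    -- well-definedness of the induced map on fractions
    have wd : ∀ (x : AddMonoid.End M) (a t : A) (g : AddMonoid.End M) (a' t' : A)
        (g' : AddMonoid.End M), LFR.Rep η x a t g → LFR.Rep η x a' t' g' →
        κ a * v t = κ a' * v t' := by
      intro x a t g a' t' g' ⟨ht, h1, h2, he⟩ ⟨ht', h1', h2', he'⟩
      have huu' : η t * η t' = η t' * η t := ht'.comm t
      have hcross : η a * η t' = η a' * η t :=
        LFR.frac_cross h1 h2 h1' h2' huu' (he ▸ he')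
      have hκcross : κ a * κ t' = κ a' * κ t := by
        rw [← map_mul, ← map_mul]
        exact κ_congr _ _ (by rw [map_mul, map_mul]; exact hcross)
      exact LFR.frac_wd (hv1 t ht) (hv2 t ht) (hv1 t' ht') (hv2 t' ht')
        (hκcomm t t' ht).symm hκcross
    -- the underlying function of ρ
    have repx : ∀ x : localFunctionRing η, ∃ a t g, LFR.Rep η x.1 a t g := fun x =>
      LFR.rep_exists hM x.2
    choose ra rt rg hrep using repx
    set f : localFunctionRing η → B := fun x => κ (ra x) * v (rt x) with hf
    have fspec : ∀ (x : localFunctionRing η) (a t : A) (g : AddMonoid.End M),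
        LFR.Rep η x.1 a t g → f x = κ a * v t := fun x a t g h =>
      wd x.1 _ _ _ _ _ _ (hrep x) h
    -- `v` of a product of good denominators
    have vmul : ∀ t t' : A, LFR.Good η t → LFR.Good η t' → v (t * t') = v t * v t' := by
      intro t t' ht ht'
      rw [hv]
      simp only [map_mul]
      exact LFR.inverse_eq
        (LFR.prod_inv_left (hv1 t ht) (hv2 t ht) (hv1 t' ht') (hv2 t' ht') (hκcomm t t' ht).symm)
        (LFR.prod_inv_right (hv1 t ht) (hv2 t ht) (hv1 t' ht') (hv2 t' ht') (hκcomm t t' ht).symm)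
    have gm : LFR.Good η (1 : A) := LFR.good_one hM
    have v_one : v 1 = 1 := by rw [hv]; simp [Ring.inverse_one]
    have f_eta : ∀ a : A, f (localFunctionRingMap η a) = κ a := by
      intro a
      rw [fspec _ a 1 1 (LFR.rep_triv hM a), v_one, mul_one]
    -- ρ is a ring homomorphism
    have f_one : f 1 = 1 := by
      have : (1 : localFunctionRing η) = localFunctionRingMap η 1 := by
        exact Subtype.ext (by simp)
      rw [this, f_eta, map_one]
    have f_mul : ∀ x y, f (x * y) = f x * f y := by
      intro x y
      obtain ⟨a, t, g, hx⟩ := LFR.rep_exists hM x.2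
      obtain ⟨a', t', g', hy⟩ := LFR.rep_exists hM y.2
      have hxy : LFR.Rep η ((x * y) : localFunctionRing η).1 (a * a') (t * t') (g * g') :=
        LFR.rep_mul hM hx hy
      rw [fspec _ _ _ _ hxy, fspec _ _ _ _ hx, fspec _ _ _ _ hy,
        vmul t t' hx.1 hy.1, map_mul]
      exact (LFR.frac_mul (hv1 t hx.1) (hv2 t hx.1) (hκcomm t a' hx.1)).symm
    have f_add : ∀ x y, f (x + y) = f x + f y := by
      intro x y
      obtain ⟨a, t, g, hx⟩ := LFR.rep_exists hM x.2
      obtain ⟨a', t', g', hy⟩ := LFR.rep_exists hM y.2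
      have hxy : LFR.Rep η ((x + y) : localFunctionRing η).1
          (a * t' + a' * t) (t * t') (g * g') := LFR.rep_add hM hx hy
      rw [fspec _ _ _ _ hxy, fspec _ _ _ _ hx, fspec _ _ _ _ hy,
        vmul t t' hx.1 hy.1, map_add, map_mul, map_mul]
      exact LFR.frac_add (hv1 t hx.1) (hv2 t hx.1) (hv1 t' hy.1) (hv2 t' hy.1)
        (hκcomm t t' hx.1).symm
    have f_zero : f 0 = 0 := by
      have : (0 : localFunctionRing η) = localFunctionRingMap η 0 := by
        exact Subtype.ext (by simp)
      rw [this, f_eta, map_zero]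
    refine ⟨⟨⟨⟨f, f_one⟩, f_mul⟩, f_zero, f_add⟩, ?_, ?_⟩
    · exact RingHom.ext fun a => f_eta a
    · -- uniqueness
      intro ρ hρ
      refine LFR.hom_ext (ρ₂ := ⟨⟨⟨f, f_one⟩, f_mul⟩, f_zero, f_add⟩) ?_
      rw [hρ]
      exact (RingHom.ext fun a => f_eta a).symm
end

section
/- Let A be an associative unital ring, M a nonzero abelian group, η : A → End_ℤ(M) a ring homomorphism making M a simple A-module, D_M the centralizer of range η in End_ℤ(M), and A_M ⊆ End_ℤ(M) the local function ring of A in M, with corestriction η_c : A → A_M. Let B be an associative unital ring with an injective ring homomorphism μ : B → End_ℤ(M) such that μ(t) is a unit in B whenever μ(t) lies in the centralizer of range μ and μ(t) ≠ 0 (B is a Local Function Ring on M), and assume that the centralizer of range μ in End_ℤ(M) equals D_M (the A-linear and the B-linear endomorphisms of M coincide). Then for every ring homomorphism κ : A → B with μ ∘ κ = η there exists a unique ring homomorphism ρ : A_M → B with ρ ∘ η_c = κ. (The functor L^A_M on Local Function Rings is represented by η_c : A → A_M.) -/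
theorem Subring.closure_closure_coe_preimage {R : Type*} [Ring R] {s : Set R} :
    Subring.closure (((↑) : Subring.closure s → R) ⁻¹' s) = ⊤ :=
  eq_top_iff.2 fun x _ ↦ Subtype.recOn x fun _ hx ↦
    Subring.closure_induction (fun _ h ↦ Subring.subset_closure h) (zero_mem _) (one_mem _)
      (fun _ _ _ _ ↦ add_mem) (fun _ _ ↦ neg_mem) (fun _ _ _ _ ↦ mul_mem) hx

theorem RingHom.exists_comp_eq_subtype_of_le_range {B R : Type*} [Ring B] [Ring R]
    {f : B →+* R} (hf : Function.Injective f) {S : Subring R} (hS : S ≤ f.range) :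
    ∃ ρ : S →+* B, f.comp ρ = S.subtype :=
  ⟨(RingEquiv.ofLeftInverse (Function.leftInverse_invFun hf)).symm.toRingHom.comp
      (Subring.inclusion hS),
    RingHom.ext fun x ↦ Function.invFun_eq (hS x.2)⟩

section LocalFunctionRing

variable {A M : Type*} [Ring A] [AddCommGroup M] (η : A →+* AddMonoid.End M)

theorem localFunctionRing_hom_ext {R : Type*} [Semiring R] {ρ₁ ρ₂ : localFunctionRing η →+* R}
    (h : ρ₁.comp (localFunctionRingMap η) = ρ₂.comp (localFunctionRingMap η)) : ρ₁ = ρ₂ := by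
  refine RingHom.eq_of_eqOn_set_dense Subring.closure_closure_coe_preimage ?_
  intro (x : localFunctionRing η) hx
  show ρ₁ x = ρ₂ x
  rcases hx with ⟨a, ha⟩ | ⟨s, -, -, hxs, hsx⟩
  · obtain rfl : localFunctionRingMap η a = x := Subtype.ext ha
    exact RingHom.congr_fun h a
  · have hs : ρ₁ (localFunctionRingMap η s) = ρ₂ (localFunctionRingMap η s) :=
      RingHom.congr_fun h s
    have hxs' : x * localFunctionRingMap η s = 1 := Subtype.ext hxs
    have hsx' : localFunctionRingMap η s * x = 1 := Subtype.ext hsx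
    refine left_inv_eq_right_inv (a := ρ₂ (localFunctionRingMap η s)) ?_ ?_
    · rw [← hs, ← map_mul, hxs', map_one]
    · rw [← map_mul, hsx', map_one]

theorem localFunctionRing_le_range {B : Type*} [Ring B] (μ : B →+* AddMonoid.End M)
    (hLFR : ∀ t : B, μ t ∈ Subring.centralizer (Set.range μ) → μ t ≠ 0 → IsUnit t)
    (hcent : moduleCentralizer η ≤ Subring.centralizer (Set.range μ))
    (κ : A →+* B) (hκ : μ.comp κ = η) : localFunctionRing η ≤ μ.range := by
  rw [localFunctionRing, Subring.closure_le]
  rintro g (⟨a, rfl⟩ | ⟨s, hsD, hs0, -, hsg⟩)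
  · exact ⟨κ a, RingHom.congr_fun hκ a⟩
  · have hμκ : μ (κ s) = η s := RingHom.congr_fun hκ s
    obtain ⟨u, hu⟩ := hLFR (κ s) (hμκ ▸ hcent hsD) (hμκ ▸ hs0)
    refine ⟨↑u⁻¹, left_inv_eq_right_inv ?_ hsg⟩
    rw [← hμκ, ← hu, ← map_mul, Units.inv_mul, map_one]

end LocalFunctionRing

theorem localFunctionRing_represents_LFR_functor_general
    {A M : Type*} [Ring A] [AddCommGroup M]
    (η : A →+* AddMonoid.End M)
    {B : Type*} [Ring B] (μ : B →+* AddMonoid.End M)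
    (hμinj : Function.Injective μ)
    (hLFR : ∀ t : B, μ t ∈ Subring.centralizer (Set.range μ) → μ t ≠ 0 → IsUnit t)
    (hcent : Subring.centralizer (Set.range μ) = moduleCentralizer η)
    (κ : A →+* B) (hκ : μ.comp κ = η) :
    ∃! ρ : localFunctionRing η →+* B, ρ.comp (localFunctionRingMap η) = κ := by
  obtain ⟨ρ, hρ⟩ := μ.exists_comp_eq_subtype_of_le_range hμinj
    (localFunctionRing_le_range η μ hLFR hcent.ge κ hκ)
  have hρκ : ρ.comp (localFunctionRingMap η) = κ :=
    RingHom.ext fun a ↦ hμinj ((RingHom.congr_fun hρ _).trans (RingHom.congr_fun hκ a).symm)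
  exact ⟨ρ, hρκ, fun ρ' hρ' ↦ localFunctionRing_hom_ext η (hρ'.trans hρκ.symm)⟩

/-- Let `η : A → End_ℤ(M)` make `M` a simple `A`-module, with local
function ring `A_M` and corestriction `η_c : A → A_M`.  Let `B` be a ring with an
injective ring homomorphism `μ : B → End_ℤ(M)` such that `μ t` is a unit of `B` whenever
`μ t` is a nonzero element of the centralizer of `range μ` (i.e. `B` is a Local Function
Ring on `M`), and assume the centralizer of `range μ` equals `D_M`.  Then for every ring
homomorphism `κ : A → B` with `μ ∘ κ = η` there exists a unique ring homomorphism
`ρ : A_M → B` with `ρ ∘ η_c = κ`.  (The functor `L^A_M` on Local Function Rings is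
represented by `η_c : A → A_M`.) -/
theorem localFunctionRing_represents_LFR_functor
    {A M : Type*} [Ring A] [AddCommGroup M]
    (η : A →+* AddMonoid.End M) (hM : IsSimpleStructureMap η)
    {B : Type*} [Ring B] (μ : B →+* AddMonoid.End M)
    (hμinj : Function.Injective μ)
    (hLFR : ∀ t : B, μ t ∈ Subring.centralizer (Set.range μ) → μ t ≠ 0 → IsUnit t)
    (hcent : Subring.centralizer (Set.range μ) = moduleCentralizer η)
    (κ : A →+* B) (hκ : μ.comp κ = η) :
    ∃! ρ : localFunctionRing η →+* B, ρ.comp (localFunctionRingMap η) = κ :=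
  localFunctionRing_represents_LFR_functor_general η μ hμinj hLFR hcent κ hκ
end
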